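/- arXiv:1005.1819 — 4 statements merged into one kernel-verified Lean document; each statement's English description precedes it below -/
import Mathlib

section
/- Let E be an infinite-dimensional Banach space over ℂ and L : E → E a compact linear operator. Then the approximate point spectrum Σ(L) = {λ ∈ ℂ : inf_{‖x‖=1} ‖λx − Lx‖ = 0} coincides with the spectrum σ(L) of L. -/
/-!
The infimum of `‖λx - Lx‖` over the unit sphere is the best constant `c` with
`c‖x‖ ≤ ‖(λ - L)x‖`, so it vanishes exactly when `λ - L` is not bounded below. An invertible
operator is bounded below. Conversely, for `λ ≠ 0` a bounded-below `λ - L` is injective, hence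
invertible by the Fredholm alternative; for `λ = 0` a compact operator that is bounded below
pulls back a compact set containing the image of the unit ball to a totally bounded
neighbourhood of `0`, which forces finite dimension.
-/

open Metric

section UnitSphere

variable {𝕜 E F : Type*} [RCLike 𝕜] [NormedAddCommGroup E] [NormedSpace 𝕜 E]
  [NormedAddCommGroup F] [NormedSpace 𝕜 F]

theorem ContinuousLinearMap.forall_mul_norm_le_iff_forall_norm_eq_one (f : E →L[𝕜] F) (c : ℝ) :
    (∀ x, c * ‖x‖ ≤ ‖f x‖) ↔ ∀ x, ‖x‖ = 1 → c ≤ ‖f x‖ := by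
  refine ⟨fun h x hx => by simpa [hx] using h x, fun h x => ?_⟩
  rcases eq_or_ne x 0 with rfl | hx
  · simp
  have hx' : 0 < ‖x‖ := norm_pos_iff.2 hx
  have := h _ (norm_smul_inv_norm (𝕜 := 𝕜) hx)
  rw [map_smul, norm_smul, norm_inv, RCLike.norm_ofReal, abs_norm, le_inv_mul_iff₀ hx'] at this
  rwa [mul_comm]

theorem ContinuousLinearMap.exists_antilipschitzWith_iff_sInf_pos [Nontrivial E] (f : E →L[𝕜] F) :
    (∃ K, AntilipschitzWith K f) ↔ 0 < sInf {r : ℝ | ∃ x : E, ‖x‖ = 1 ∧ r = ‖f x‖} := by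
  set S := {r : ℝ | ∃ x : E, ‖x‖ = 1 ∧ r = ‖f x‖}
  have hS : S.Nonempty := by
    obtain ⟨x, hx⟩ := exists_ne (0 : E)
    exact ⟨_, _, norm_smul_inv_norm (𝕜 := 𝕜) hx, rfl⟩
  have le_sInf_iff (c : ℝ) : c ≤ sInf S ↔ ∀ x, c * ‖x‖ ≤ ‖f x‖ := by
    rw [le_csInf_iff ⟨0, by rintro _ ⟨x, -, rfl⟩; positivity⟩ hS,
      f.forall_mul_norm_le_iff_forall_norm_eq_one]
    exact ⟨fun h x hx => h _ ⟨x, hx, rfl⟩, by rintro h _ ⟨x, hx, rfl⟩; exact h x hx⟩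
  rw [antilipschitzWith_iff_exists_mul_le_norm]
  simp_rw [← le_sInf_iff]
  exact ⟨fun ⟨c, hc, h⟩ => hc.trans_le h, fun h => ⟨_, h, le_rfl⟩⟩

end UnitSphere

theorem IsCompactOperator.finiteDimensional_of_antilipschitzWith {𝕜 E F : Type*}
    [NontriviallyNormedField 𝕜] [CompleteSpace 𝕜] [NormedAddCommGroup E] [NormedSpace 𝕜 E]
    [NormedAddCommGroup F] [NormedSpace 𝕜 F] {T : E →L[𝕜] F} (hT : IsCompactOperator T)
    {K : NNReal} (hK : AntilipschitzWith K T) : FiniteDimensional 𝕜 E := by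
  obtain ⟨C, hC, hTC⟩ := hT.image_closedBall_subset_compact 1
  refine .of_totallyBounded_nhds_zero 𝕜 (closedBall_mem_nhds 0 one_pos) ?_
  exact (totallyBounded_preimage (hK.isUniformInducing T.uniformContinuous)
    hC.totallyBounded).subset (Set.image_subset_iff.1 hTC)

namespace IsCompactOperator

variable {𝕜 E : Type*} [NontriviallyNormedField 𝕜] [NormedAddCommGroup E] [NormedSpace 𝕜 E]
  [CompleteSpace E] {T : E →L[𝕜] E} {μ : 𝕜}

theorem mem_resolventSet_of_antilipschitzWith (hT : IsCompactOperator T) (hμ : μ ≠ 0) {K : NNReal}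
    (hK : AntilipschitzWith K (algebraMap 𝕜 (E →L[𝕜] E) μ - T)) : μ ∈ resolventSet 𝕜 T := by
  refine (hT.hasEigenvalue_or_mem_resolventSet hμ).resolve_left fun h => ?_
  obtain ⟨v, hv⟩ := h.exists_hasEigenvector
  have hTv : T v = μ • v := hv.apply_eq_smul
  refine hv.2 (hK.injective ?_)
  simp [Algebra.algebraMap_eq_smul_one, hTv]

theorem mem_resolventSet_iff_exists_antilipschitzWith [CompleteSpace 𝕜]
    (hT : IsCompactOperator T) (hE : ¬ FiniteDimensional 𝕜 E) :
    μ ∈ resolventSet 𝕜 T ↔ ∃ K, AntilipschitzWith K (algebraMap 𝕜 (E →L[𝕜] E) μ - T) := by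
  refine ⟨fun h => ?_, fun ⟨K, hK⟩ => ?_⟩
  · exact ⟨_,
      (ContinuousLinearEquiv.unitsEquiv 𝕜 E (spectrum.mem_resolventSet_iff.1 h).unit).antilipschitz⟩
  rcases eq_or_ne μ 0 with rfl | hμ
  · have hT' : IsCompactOperator (-T : E →L[𝕜] E) := hT.neg
    exact absurd (hT'.finiteDimensional_of_antilipschitzWith (by simpa using hK)) hE
  · exact hT.mem_resolventSet_of_antilipschitzWith hμ hK

end IsCompactOperator

theorem compact_op_approx_spectrum_eq_spectrum {E : Type*}
    [NormedAddCommGroup E] [NormedSpace ℂ E] [CompleteSpace E]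
    (hE : ¬ FiniteDimensional ℂ E)
    (L : E →L[ℂ] E) (hL : IsCompactOperator L) :
    {l : ℂ | sInf {r : ℝ | ∃ x : E, ‖x‖ = 1 ∧ r = ‖l • x - L x‖} = 0}
      = spectrum ℂ L := by
  have : Nontrivial E := by
    contrapose! hE
    infer_instance
  ext μ
  have hS : {r : ℝ | ∃ x : E, ‖x‖ = 1 ∧ r = ‖μ • x - L x‖}
      = {r : ℝ | ∃ x : E, ‖x‖ = 1 ∧ r = ‖(algebraMap ℂ (E →L[ℂ] E) μ - L) x‖} := by
    simp [Algebra.algebraMap_eq_smul_one]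
  have hnonneg : 0 ≤ sInf {r : ℝ | ∃ x : E, ‖x‖ = 1 ∧ r = ‖μ • x - L x‖} :=
    Real.sInf_nonneg (by rintro _ ⟨x, -, rfl⟩; positivity)
  rw [Set.mem_ofPred_eq, ← hnonneg.ge_iff_eq', ← not_lt, spectrum, Set.mem_compl_iff,
    hL.mem_resolventSet_iff_exists_antilipschitzWith hE, hS,
    ContinuousLinearMap.exists_antilipschitzWith_iff_sInf_pos]
end

section
/- For f : ℝ → ℝ defined by f(x) = √|x|·sin(1/x) for x ≠ 0 and f(0) = 0, one has Σ(f,0) = ℝ: for every λ ∈ ℝ, liminf_{h→0, h≠0} |λh − f(h)|/|h| = 0. -/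
/-! For large `t` the zeros of `t ↦ sin t - λ / √t` are unbounded: on each interval
`[2πn - π/2, 2πn + π/2]` the sine runs from `-1` to `1` while `|λ / √t| ≤ 1`. At `h = 1/t`
for such a zero `t`, `λh = √h · sin (1/h)`, so the nonnegative quotient `|λh - f(h)| / |h|`
vanishes at points `h → 0⁺`, and its liminf is `0`. -/

open Filter Set Real

theorem Filter.liminf_eq_of_frequently_eq_of_forall_le {α ι : Type*}
    [ConditionallyCompleteLinearOrder α] {f : Filter ι} {u : ι → α} {a : α}
    (hle : ∀ i, a ≤ u i) (hfreq : ∃ᶠ i in f, u i = a) : liminf u f = a := by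
  have hfreq_le : ∃ᶠ i in f, u i ≤ a := hfreq.mono fun _ hi => hi.le
  exact le_antisymm
    (liminf_le_of_frequently_le hfreq_le (isBoundedUnder_of ⟨a, hle⟩))
    (le_liminf_of_le (IsCoboundedUnder.of_frequently_le hfreq_le) (Eventually.of_forall hle))

theorem Real.exists_sin_eq_of_abs_le_one {c : ℝ → ℝ} (n : ℤ)
    (hc : ContinuousOn c (Icc (-(π / 2) + n * (2 * π)) (π / 2 + n * (2 * π))))
    (hc_le : ∀ t ∈ Icc (-(π / 2) + n * (2 * π)) (π / 2 + n * (2 * π)), |c t| ≤ 1) :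
    ∃ t ∈ Icc (-(π / 2) + n * (2 * π)) (π / 2 + n * (2 * π)), sin t = c t := by
  have hab : -(π / 2) + n * (2 * π) ≤ π / 2 + n * (2 * π) := by linarith [pi_pos]
  have hleft := hc_le _ (left_mem_Icc.2 hab)
  have hright := hc_le _ (right_mem_Icc.2 hab)
  obtain ⟨t, ht, hzero⟩ := intermediate_value_Icc hab (continuousOn_sin.sub hc)
    (show (0 : ℝ) ∈ Icc _ _ by
      simp only [Pi.sub_apply, sin_add_int_mul_two_pi, sin_neg, sin_pi_div_two, mem_Icc]
      constructor <;> linarith [abs_le.1 hleft, abs_le.1 hright])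
  exact ⟨t, ht, sub_eq_zero.1 hzero⟩

theorem Real.frequently_sin_eq_mul_sqrt_inv (l : ℝ) :
    ∃ᶠ t in atTop, sin t = l * √t⁻¹ := by
  refine frequently_atTop.2 fun a => ?_
  obtain ⟨n, hn⟩ := exists_nat_gt (max a (l ^ 2) + 2)
  have hstart : max a (l ^ 2) < -(π / 2) + (n : ℤ) * (2 * π) := by
    push_cast
    nlinarith [pi_gt_three, pi_lt_four, le_max_right a (l ^ 2), sq_nonneg l]
  have hlt : ∀ t ∈ Icc (-(π / 2) + (n : ℤ) * (2 * π)) (π / 2 + (n : ℤ) * (2 * π)),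
      max a (l ^ 2) < t :=
    fun t ht => hstart.trans_le ht.1
  have hpos : ∀ t ∈ Icc (-(π / 2) + (n : ℤ) * (2 * π)) (π / 2 + (n : ℤ) * (2 * π)), 0 < t :=
    fun t ht => (sq_nonneg l).trans_lt ((le_max_right a _).trans_lt (hlt t ht))
  obtain ⟨t, ht, hsin⟩ := exists_sin_eq_of_abs_le_one (c := fun t => l * √t⁻¹) n
    (continuousOn_const.mul (continuousOn_inv₀.mono fun t ht => (hpos t ht).ne').sqrt)
    (fun t ht => by
      rw [abs_mul, abs_of_nonneg (sqrt_nonneg _), sqrt_inv, ← div_eq_mul_inv,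
        div_le_one (sqrt_pos.2 (hpos t ht))]
      exact abs_le_sqrt ((le_max_right a _).trans_lt (hlt t ht)).le)
  exact ⟨t, ((le_max_left a _).trans_lt (hlt t ht)).le, hsin⟩

theorem Real.mul_sub_sqrt_mul_sin_inv_eq_zero {l t : ℝ} (ht : 0 < t) (hsin : sin t = l * √t⁻¹) :
    l * t⁻¹ - √|t⁻¹| * sin (1 / t⁻¹) = 0 := by
  rw [one_div, inv_inv, hsin, abs_of_pos (inv_pos.2 ht), ← mul_assoc, mul_comm √t⁻¹ l,
    mul_assoc, mul_self_sqrt (inv_nonneg.2 ht.le), sub_self]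

theorem Sigma_univ_sqrt_sin (l : ℝ) :
    Filter.liminf
        (fun h : ℝ => |l * h - Real.sqrt |h| * Real.sin (1 / h)| / |h|)
        (nhdsWithin 0 {0}ᶜ) = 0 := by
  refine liminf_eq_of_frequently_eq_of_forall_le (fun _ => by positivity) ?_
  have hinv : Tendsto (fun t : ℝ => t⁻¹) atTop (nhdsWithin 0 {0}ᶜ) :=
    tendsto_inv_atTop_nhdsGT_zero.mono_right (nhdsWithin_mono _ fun _ h => ne_of_gt h)
  refine hinv.frequently ?_
  refine ((frequently_sin_eq_mul_sqrt_inv l).and_eventually (eventually_gt_atTop 0)).mono ?_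
  rintro t ⟨hsin, ht⟩
  rw [mul_sub_sqrt_mul_sin_inv_eq_zero ht hsin, abs_zero, zero_div]
end

section
/- Let f : ℂ → ℂ be defined by f(x + iy) = |x| + iy. Then λ = a + ib satisfies inf_{|z|=1} |λz − f(z)| = 0 if and only if a² + b² = 1. That is, Σ(f,0) = S¹. -/
/-!
The map `absRe z = |Re z| + i Im z` preserves norms, so `|‖λ‖ - 1| ≤ ‖λ z - absRe z‖` on the unit
circle and the infimum vanishes only if `‖λ‖ = 1`. Conversely, on the left half-plane `absRe` is
`z ↦ -conj z`, and for `‖λ‖ = 1` a square root `z` of `-conj λ` chosen there is a unit eigenvector: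
`λ z² = -λ conj λ = -1 = -conj z · z`.
-/

open Complex ComplexConjugate

namespace Complex

noncomputable def absRe (z : ℂ) : ℂ := (|z.re| : ℝ) + z.im * I

theorem norm_absRe (z : ℂ) : ‖absRe z‖ = ‖z‖ := by
  simp only [absRe, norm_def, normSq_apply, add_re, ofReal_re, mul_re, I_re, I_im, ofReal_im,
    add_im, mul_im, mul_zero, mul_one, sub_zero, add_zero, zero_add, abs_mul_abs_self]

theorem absRe_of_re_nonpos {z : ℂ} (h : z.re ≤ 0) : absRe z = -conj z := by
  apply Complex.ext <;> simp [absRe, abs_of_nonpos h]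

theorem exists_sq_eq_and_re_nonpos (w : ℂ) : ∃ z : ℂ, z ^ 2 = w ∧ z.re ≤ 0 := by
  obtain ⟨z, hz⟩ := IsAlgClosed.exists_pow_nat_eq w two_pos
  rcases le_total z.re 0 with h | h
  · exact ⟨z, hz, h⟩
  · exact ⟨-z, by rwa [neg_sq], by simpa using h⟩

theorem exists_norm_eq_one_mul_eq_absRe {l : ℂ} (hl : ‖l‖ = 1) :
    ∃ z : ℂ, ‖z‖ = 1 ∧ l * z = absRe z := by
  obtain ⟨z, hz2, hre⟩ := exists_sq_eq_and_re_nonpos (-conj l)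
  have hz : ‖z‖ = 1 := by
    have : ‖z‖ ^ 2 = 1 := by rw [← norm_pow, hz2, norm_neg, RCLike.norm_conj, hl]
    nlinarith [norm_nonneg z]
  have hz0 : z ≠ 0 := norm_ne_zero_iff.mp (by rw [hz]; exact one_ne_zero)
  refine ⟨z, hz, ?_⟩
  rw [absRe_of_re_nonpos hre]
  apply mul_right_cancel₀ hz0
  calc l * z * z = -(l * conj l) := by rw [mul_assoc, ← sq, hz2, mul_neg]
    _ = -conj z * z := by rw [mul_conj', hl, neg_mul, conj_mul', hz]

theorem abs_norm_sub_one_le_norm_mul_sub_absRe (l : ℂ) {z : ℂ} (hz : ‖z‖ = 1) :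
    |‖l‖ - 1| ≤ ‖l * z - absRe z‖ := by
  simpa [norm_mul, hz, norm_absRe] using abs_norm_sub_norm_le (l * z) (absRe z)

end Complex

theorem Sigma_abs_re_eq_sphere :
    {l : ℂ | sInf {r : ℝ | ∃ z : ℂ, ‖z‖ = 1 ∧
        r = ‖l * z - (((|z.re| : ℝ) : ℂ) + (z.im : ℂ) * Complex.I)‖} = 0}
      = Metric.sphere (0 : ℂ) 1 := by
  ext l
  rw [Metric.mem_sphere, dist_zero_right]
  change sInf {r : ℝ | ∃ z : ℂ, ‖z‖ = 1 ∧ r = ‖l * z - absRe z‖} = 0 ↔ ‖l‖ = 1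
  set S := {r : ℝ | ∃ z : ℂ, ‖z‖ = 1 ∧ r = ‖l * z - absRe z‖}
  have hS : S.Nonempty := ⟨_, 1, norm_one, rfl⟩
  constructor
  · intro h
    have hbound : |‖l‖ - 1| ≤ sInf S :=
      le_csInf hS fun _ ⟨z, hz, hr⟩ => hr ▸ abs_norm_sub_one_le_norm_mul_sub_absRe l hz
    rw [h] at hbound
    linarith [abs_nonpos_iff.mp hbound]
  · intro hl
    obtain ⟨z, hz, heig⟩ := exists_norm_eq_one_mul_eq_absRe hl
    refine IsLeast.csInf_eq ⟨⟨z, hz, by rw [heig, sub_self, norm_zero]⟩, ?_⟩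
    rintro _ ⟨w, -, rfl⟩
    exact norm_nonneg _
end

section
/- Let f : E → E be continuous on a Banach space E and suppose g = f + h where h : E → E is continuous with limsup_{x→p, x≠p} ‖h(x) − h(p)‖/‖x − p‖ = 0. Then for every λ ∈ 𝕂, d_p(λ − f) = d_p(λ − g), where d_p(F) = liminf_{x→0, x≠0} ‖F(p+x) − F(p)‖/‖x‖; in particular Σ(f,p) = Σ(g,p). -/
open Filter Topology

/-- The lower local quasinorm `d_p(F)` (valued in `ℝ≥0∞`). -/
noncomputable def dpE {E : Type*} [NormedAddCommGroup E] (F : E → E) (p : E) : ENNReal :=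
  Filter.liminf (fun x : E => ENNReal.ofReal (‖F x - F p‖ / ‖x - p‖)) (nhdsWithin p {p}ᶜ)

theorem ENNReal.liminf_le_liminf_of_le_add {α : Type*} {l : Filter α} {u v c : α → ENNReal}
    (hle : ∀ᶠ x in l, u x ≤ v x + c x) (hc : limsup c l = 0) :
    liminf u l ≤ liminf v l := by
  rcases l.eq_or_neBot with rfl | hne
  · simp [liminf_eq]
  refine ENNReal.le_of_forall_pos_le_add fun ε hε _ => ?_
  have hc_lt : ∀ᶠ x in l, c x < ε :=
    eventually_lt_of_limsup_lt (by rw [hc]; exact_mod_cast hε) isBounded_le_of_top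
  have hle_ε : ∀ᶠ x in l, u x ≤ v x + ε := by
    filter_upwards [hle, hc_lt] with x hu hcx
    exact hu.trans (add_le_add_right hcx.le _)
  calc liminf u l ≤ liminf (fun x => v x + ε) l := liminf_le_liminf hle_ε
    _ = liminf v l + ε := liminf_add_const l v _ (by isBoundedDefault) (by isBoundedDefault)

section normSlope

variable {E F : Type*} [SeminormedAddCommGroup E] [SeminormedAddCommGroup F]

-- Division by zero makes this vanish at `x = p`, so no `x ≠ p` side conditions arise.
noncomputable def normSlope (G : E → F) (p x : E) : ENNReal :=
  ENNReal.ofReal (‖G x - G p‖ / ‖x - p‖)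

theorem normSlope_le_add (G H : E → F) (p x : E) :
    normSlope G p x ≤ normSlope H p x + normSlope (G - H) p x := by
  rw [normSlope, normSlope, normSlope, ← ENNReal.ofReal_add (by positivity) (by positivity),
    ← add_div]
  refine ENNReal.ofReal_le_ofReal (div_le_div_of_nonneg_right ?_ (norm_nonneg _))
  calc ‖G x - G p‖ = ‖(H x - H p) + ((G - H) x - (G - H) p)‖ := by
        simp only [Pi.sub_apply]; abel_nf
    _ ≤ _ := norm_add_le _ _

theorem normSlope_sub_comm (G H : E → F) (p : E) : normSlope (G - H) p = normSlope (H - G) p := by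
  funext x
  rw [normSlope, normSlope, ← norm_neg]
  simp only [Pi.sub_apply, neg_sub]
  abel_nf

end normSlope

section dpE

variable {E : Type*} [NormedAddCommGroup E]

theorem dpE_le_of_limsup_normSlope_sub_eq_zero {G H : E → E} {p : E}
    (h : limsup (normSlope (G - H) p) (𝓝[≠] p) = 0) : dpE G p ≤ dpE H p :=
  ENNReal.liminf_le_liminf_of_le_add (.of_forall (normSlope_le_add G H p)) h

theorem dpE_eq_of_limsup_normSlope_sub_eq_zero {G H : E → E} {p : E}
    (h : limsup (normSlope (G - H) p) (𝓝[≠] p) = 0) : dpE G p = dpE H p :=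
  le_antisymm (dpE_le_of_limsup_normSlope_sub_eq_zero h)
    (dpE_le_of_limsup_normSlope_sub_eq_zero (by rwa [normSlope_sub_comm]))

end dpE

theorem dp_eq_of_quasinorm_zero_general {𝕜 E : Type*} [RCLike 𝕜]
    [NormedAddCommGroup E] [NormedSpace 𝕜 E]
    (f h g : E → E) (p : E)
    (hg : g = fun x => f x + h x)
    (hquasi : Filter.limsup (fun x : E => ENNReal.ofReal (‖h x - h p‖ / ‖x - p‖))
      (nhdsWithin p {p}ᶜ) = 0) :
    (∀ l : 𝕜, dpE (fun x => l • x - f x) p = dpE (fun x => l • x - g x) p) ∧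
    ({l : 𝕜 | dpE (fun x => l • x - f x) p = 0}
      = {l : 𝕜 | dpE (fun x => l • x - g x) p = 0}) := by
  have hdp : ∀ l : 𝕜, dpE (fun x => l • x - f x) p = dpE (fun x => l • x - g x) p := by
    intro l
    have hsub : ((fun x => l • x - f x) - fun x => l • x - g x) = h := by
      funext x
      simp only [hg, Pi.sub_apply]
      abel
    exact dpE_eq_of_limsup_normSlope_sub_eq_zero (by rwa [hsub])
  exact ⟨hdp, by simp only [hdp]⟩

theorem dp_eq_of_quasinorm_zero {𝕜 E : Type*} [RCLike 𝕜]
    [NormedAddCommGroup E] [NormedSpace 𝕜 E] [CompleteSpace E]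
    (f h g : E → E) (hf : Continuous f) (hh : Continuous h) (p : E)
    (hg : g = fun x => f x + h x)
    (hquasi : Filter.limsup (fun x : E => ENNReal.ofReal (‖h x - h p‖ / ‖x - p‖))
      (nhdsWithin p {p}ᶜ) = 0) :
    (∀ l : 𝕜, dpE (fun x => l • x - f x) p = dpE (fun x => l • x - g x) p) ∧
    ({l : 𝕜 | dpE (fun x => l • x - f x) p = 0}
      = {l : 𝕜 | dpE (fun x => l • x - g x) p = 0}) :=
  dp_eq_of_quasinorm_zero_general f h g p hg hquasi
end
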